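/- arXiv:1302.7098 — 4 statements merged into one kernel-verified Lean document; each statement's English description precedes it below -/
import Mathlib

section
/- Let δ > 0, p > 0, q > 0 with p + 1 < 2q. Then there exist constants 0 < c < C and h₀ > 0 such that for all h ∈ (0, h₀): c·h^{(p+1)/2 − q} ≤ ∫₀^δ x^p/(h + x²)^q dx ≤ C·h^{(p+1)/2 − q}. -/
open Real MeasureTheory

/-- Lemma B.3 (case 1) of Gérard-Varet–Hillairet–Wang: for `p + 1 < 2q`, the integral
`∫₀^δ x^p / (h + x²)^q dx` behaves like `h^((p+1)/2 - q)` as `h → 0`. -/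
theorem integral_asymptotics_power (δ p q : ℝ) (hδ : 0 < δ) (hp : 0 < p) (hq : 0 < q)
    (hpq : p + 1 < 2 * q) :
    ∃ c C h₀ : ℝ, 0 < c ∧ c < C ∧ 0 < h₀ ∧
      ∀ h ∈ Set.Ioo (0 : ℝ) h₀,
        c * h ^ ((p + 1) / 2 - q) ≤ (∫ x in Set.Ioo (0 : ℝ) δ, x ^ p / (h + x ^ 2) ^ q) ∧
        (∫ x in Set.Ioo (0 : ℝ) δ, x ^ p / (h + x ^ 2) ^ q) ≤ C * h ^ ((p + 1) / 2 - q) := by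
  have hp1 : (0:ℝ) < p + 1 := by linarith
  have hqp : (0:ℝ) < 2 * q - p - 1 := by linarith
  have h2q : (1:ℝ) < (2:ℝ) ^ q :=
    (Real.one_lt_rpow_iff_of_pos (by norm_num)).mpr (Or.inl ⟨by norm_num, hq⟩)
  have h2q0 : (0:ℝ) < (2:ℝ) ^ q := by positivity
  refine ⟨1 / (2 ^ q * (p + 1)), 1 / (p + 1) + 1 / (2 * q - p - 1), δ ^ 2, ?_, ?_, ?_, ?_⟩
  · positivity
  · have h1 : 1 / (2 ^ q * (p + 1)) < 1 / (p + 1) := by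
      apply one_div_lt_one_div_of_lt hp1
      nlinarith
    have h2 : 0 < 1 / (2 * q - p - 1) := by positivity
    linarith
  · positivity
  · intro h hh
    obtain ⟨hh0, hhδ⟩ := hh
    set f : ℝ → ℝ := fun x => x ^ p / (h + x ^ 2) ^ q with hf
    set s : ℝ := Real.sqrt h with hs
    have hs0 : 0 < s := Real.sqrt_pos.mpr hh0
    have hsδ : s < δ := by
      have h1 : Real.sqrt h < Real.sqrt (δ ^ 2) := Real.sqrt_lt_sqrt hh0.le hhδ
      rwa [Real.sqrt_sq hδ.le] at h1
    have hs2 : s ^ 2 = h := Real.sq_sqrt hh0.le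
    have hsr : s = h ^ ((1:ℝ)/2) := Real.sqrt_eq_rpow h
    have hhq0 : (0:ℝ) < h ^ q := Real.rpow_pos_of_pos hh0 q
    -- continuity / integrability
    have hcont : ∀ a b : ℝ, ContinuousOn f (Set.Icc a b) := by
      intro a b
      apply ContinuousOn.div
      · exact continuousOn_id.rpow_const (fun x _ => Or.inr hp.le)
      · exact (continuousOn_const.add (continuousOn_pow 2)).rpow_const
          (fun x _ => Or.inr hq.le)
      · intro x _
        have hx : 0 < h + x ^ 2 := by positivity
        positivity
    have hint : ∀ a b : ℝ, a ≤ b → IntervalIntegrable f volume a b := fun a b hab =>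
      (hcont a b).intervalIntegrable_of_Icc hab
    have hIoo : (∫ x in Set.Ioo (0:ℝ) δ, f x) = (∫ x in (0:ℝ)..s, f x) + ∫ x in s..δ, f x := by
      rw [intervalIntegral.integral_add_adjacent_intervals (hint 0 s hs0.le) (hint s δ hsδ.le),
        intervalIntegral.integral_of_le hδ.le, MeasureTheory.integral_Ioc_eq_integral_Ioo]
    -- key rpow computations
    have hspow : s ^ (p + 1) = h ^ ((p + 1) / 2) := by
      rw [hsr, ← Real.rpow_mul hh0.le]
      congr 1
      ring
    have hsK : s ^ (p - 2*q + 1) = h ^ ((p+1)/2 - q) := by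
      rw [hsr, ← Real.rpow_mul hh0.le]
      congr 1
      ring
    have h2h : ((2*h):ℝ) ^ q = 2 ^ q * h ^ q := Real.mul_rpow (by norm_num) hh0.le
    have hkey : h ^ ((p+1)/2 - q) = h ^ ((p+1)/2) / h ^ q := Real.rpow_sub hh0 _ _
    have hK0 : 0 < h ^ ((p+1)/2 - q) := Real.rpow_pos_of_pos hh0 _
    -- lower bound
    have hg1 : IntervalIntegrable (fun x : ℝ => x ^ p / (2*h) ^ q) volume 0 s :=
      ContinuousOn.intervalIntegrable_of_Icc hs0.le
        ((continuousOn_id.rpow_const (fun x _ => Or.inr hp.le)).div_const _)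
    have hlow1 : (∫ x in (0:ℝ)..s, x ^ p / (2*h) ^ q) ≤ ∫ x in (0:ℝ)..s, f x := by
      apply intervalIntegral.integral_mono_on hs0.le hg1 (hint 0 s hs0.le)
      intro x hx
      have hx0 : 0 ≤ x := hx.1
      have hxs : x ≤ s := hx.2
      have hd1 : 0 < h + x ^ 2 := by positivity
      show x ^ p / (2*h) ^ q ≤ x ^ p / (h + x ^ 2) ^ q
      exact div_le_div_of_nonneg_left (Real.rpow_nonneg hx0 p)
        (Real.rpow_pos_of_pos hd1 q) (Real.rpow_le_rpow hd1.le (by nlinarith) hq.le)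
    have hcomp1 : (∫ x in (0:ℝ)..s, x ^ p / (2*h) ^ q)
        = h ^ ((p+1)/2) / ((2:ℝ)^q * h ^ q) / (p+1) := by
      rw [intervalIntegral.integral_div, integral_rpow (Or.inl (by linarith : (-1:ℝ) < p)),
        Real.zero_rpow hp1.ne', hspow, h2h]
      ring
    have hpos2 : 0 ≤ ∫ x in s..δ, f x := by
      apply intervalIntegral.integral_nonneg hsδ.le
      intro x hx
      have hx0 : 0 ≤ x := le_trans hs0.le hx.1
      have hd1 : 0 < h + x ^ 2 := by positivity
      exact div_nonneg (Real.rpow_nonneg hx0 p) (Real.rpow_nonneg hd1.le q)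
    -- upper bound pieces
    have hg2 : IntervalIntegrable (fun x : ℝ => x ^ p / h ^ q) volume 0 s :=
      ContinuousOn.intervalIntegrable_of_Icc hs0.le
        ((continuousOn_id.rpow_const (fun x _ => Or.inr hp.le)).div_const _)
    have hup1 : (∫ x in (0:ℝ)..s, f x) ≤ ∫ x in (0:ℝ)..s, x ^ p / h ^ q := by
      apply intervalIntegral.integral_mono_on hs0.le (hint 0 s hs0.le) hg2
      intro x hx
      have hx0 : 0 ≤ x := hx.1
      have hd1 : 0 < h + x ^ 2 := by positivity
      show x ^ p / (h + x ^ 2) ^ q ≤ x ^ p / h ^ q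
      exact div_le_div_of_nonneg_left (Real.rpow_nonneg hx0 p)
        hhq0 (Real.rpow_le_rpow hh0.le (by nlinarith) hq.le)
    have hcomp2 : (∫ x in (0:ℝ)..s, x ^ p / h ^ q) = h ^ ((p+1)/2) / h ^ q / (p+1) := by
      rw [intervalIntegral.integral_div, integral_rpow (Or.inl (by linarith : (-1:ℝ) < p)),
        Real.zero_rpow hp1.ne', hspow]
      ring
    have hg3 : IntervalIntegrable (fun x : ℝ => x ^ (p - 2*q)) volume s δ := by
      apply ContinuousOn.intervalIntegrable_of_Icc hsδ.le
      apply ContinuousOn.rpow_const continuousOn_id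
      intro x hx
      exact Or.inl (ne_of_gt (lt_of_lt_of_le hs0 hx.1))
    have hup2 : (∫ x in s..δ, f x) ≤ ∫ x in s..δ, x ^ (p - 2*q) := by
      apply intervalIntegral.integral_mono_on hsδ.le (hint s δ hsδ.le) hg3
      intro x hx
      have hx0 : 0 < x := lt_of_lt_of_le hs0 hx.1
      have hd1 : 0 < h + x ^ 2 := by positivity
      have hxq : ((x:ℝ) ^ 2) ^ q = x ^ (2*q) := by
        rw [← Real.rpow_natCast x 2, ← Real.rpow_mul hx0.le]
        norm_num
      have hxq0 : (0:ℝ) < x ^ (2*q) := Real.rpow_pos_of_pos hx0 _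
      have hd : x ^ (2*q) ≤ (h + x ^ 2) ^ q := by
        rw [← hxq]
        exact Real.rpow_le_rpow (by positivity) (by nlinarith) hq.le
      calc f x ≤ x ^ p / x ^ (2*q) := by
            show x ^ p / (h + x ^ 2) ^ q ≤ x ^ p / x ^ (2*q)
            exact div_le_div_of_nonneg_left (Real.rpow_nonneg hx0.le p) hxq0 hd
        _ = x ^ (p - 2*q) := (Real.rpow_sub hx0 p (2*q)).symm
    have hcomp3 : (∫ x in s..δ, x ^ (p - 2*q))
        = (δ ^ (p - 2*q + 1) - h ^ ((p+1)/2 - q)) / (p - 2*q + 1) := by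
      have hne : p - 2*q ≠ -1 := by intro hc; linarith
      rw [integral_rpow (Or.inr ⟨hne, Set.notMem_uIcc_of_lt hs0 hδ⟩), hsK]
    have hup2' : (∫ x in s..δ, x ^ (p - 2*q)) ≤ h ^ ((p+1)/2 - q) / (2*q - p - 1) := by
      rw [hcomp3]
      have hδa : 0 < δ ^ (p - 2*q + 1) := Real.rpow_pos_of_pos hδ _
      have heq : (δ ^ (p - 2*q + 1) - h ^ ((p+1)/2 - q)) / (p - 2*q + 1)
          = (h ^ ((p+1)/2 - q) - δ ^ (p - 2*q + 1)) / (2*q - p - 1) := by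
        rw [div_eq_div_iff (by linarith) hqp.ne']
        ring
      rw [heq]
      apply div_le_div_of_nonneg_right (by linarith) hqp.le
    have hne1 : ((2:ℝ)^q) ≠ 0 := h2q0.ne'
    have hne2 : h ^ q ≠ 0 := hhq0.ne'
    have hne3 : p + 1 ≠ 0 := hp1.ne'
    have hne4 : 2*q - p - 1 ≠ 0 := hqp.ne'
    constructor
    · rw [hIoo]
      have hc : 1 / (2 ^ q * (p + 1)) * h ^ ((p+1)/2 - q)
          = h ^ ((p+1)/2) / ((2:ℝ)^q * h ^ q) / (p+1) := by
        rw [hkey, one_div_mul_eq_div, div_div, div_div]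
        congr 1
        ring
      calc 1 / (2 ^ q * (p + 1)) * h ^ ((p+1)/2 - q)
          = ∫ x in (0:ℝ)..s, x ^ p / (2*h) ^ q := by rw [hc, hcomp1]
        _ ≤ ∫ x in (0:ℝ)..s, f x := hlow1
        _ ≤ (∫ x in (0:ℝ)..s, f x) + ∫ x in s..δ, f x := by linarith
    · rw [hIoo]
      have hC : (1 / (p + 1) + 1 / (2 * q - p - 1)) * h ^ ((p+1)/2 - q)
          = h ^ ((p+1)/2) / h ^ q / (p+1) + h ^ ((p+1)/2 - q) / (2*q - p - 1) := by
        rw [hkey]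
        ring
      calc (∫ x in (0:ℝ)..s, f x) + ∫ x in s..δ, f x
          ≤ (h ^ ((p+1)/2) / h ^ q / (p+1)) + h ^ ((p+1)/2 - q) / (2*q - p - 1) := by
            have := hup1.trans_eq hcomp2
            have := hup2.trans hup2'
            linarith
        _ = (1 / (p + 1) + 1 / (2 * q - p - 1)) * h ^ ((p+1)/2 - q) := hC.symm
end

section
/- Let δ > 0, p > 0, q > 0 with p + 1 = 2q. Then there exist constants 0 < c < C and h₀ ∈ (0,1) such that for all h ∈ (0, h₀): c·|ln h| ≤ ∫₀^δ x^p/(h + x²)^q dx ≤ C·|ln h|. -/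
open Real MeasureTheory

private lemma div_cmp_aux {A B n : ℝ} (hn : 0 ≤ n) (hA : 0 < A) (hB : 0 < B)
    (hAB : A ≤ B) : n / B ≤ n / A := by
  rw [div_le_div_iff₀ hB hA]
  exact mul_le_mul_of_nonneg_left hAB hn

set_option maxHeartbeats 2000000 in
/-- Lemma B.3 (case 2) of Gérard-Varet–Hillairet–Wang: for `p + 1 = 2q`, the integral
`∫₀^δ x^p / (h + x²)^q dx` behaves like `|ln h|` as `h → 0`. -/
theorem integral_asymptotics_log (δ p q : ℝ) (hδ : 0 < δ) (hp : 0 < p) (hq : 0 < q)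
    (hpq : p + 1 = 2 * q) :
    ∃ c C h₀ : ℝ, 0 < c ∧ c < C ∧ 0 < h₀ ∧ h₀ < 1 ∧
      ∀ h ∈ Set.Ioo (0 : ℝ) h₀,
        c * |Real.log h| ≤ (∫ x in Set.Ioo (0 : ℝ) δ, x ^ p / (h + x ^ 2) ^ q) ∧
        (∫ x in Set.Ioo (0 : ℝ) δ, x ^ p / (h + x ^ 2) ^ q) ≤ C * |Real.log h| := by
  set δ' : ℝ := min δ 1 with hδ'def
  have hδ'0 : 0 < δ' := lt_min hδ one_pos
  have hδ'1 : δ' ≤ 1 := min_le_right _ _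
  have hδ'δ : δ' ≤ δ := min_le_left _ _
  have hlog2 : (0:ℝ) < Real.log 2 := Real.log_pos (by norm_num)
  set c : ℝ := (2:ℝ) ^ (-q) / 4 with hcdef
  set K : ℝ := 1 / (p + 1) + |Real.log δ| + 1 with hKdef
  have hK0 : 0 < K := by positivity
  set C : ℝ := c + K / Real.log 2 + 1/2 with hCdef
  have hc0 : 0 < c := by positivity
  have hcC : c < C := by
    have h1 : 0 < K / Real.log 2 := div_pos hK0 hlog2
    rw [hCdef]; linarith
  refine ⟨c, C, min (δ' ^ 4) (1/2), hc0, hcC, lt_min (by positivity) (by norm_num),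
    lt_of_le_of_lt (min_le_right _ _) (by norm_num), ?_⟩
  rintro h ⟨hh0, hh1⟩
  have hhδ4 : h < δ' ^ 4 := hh1.trans_le (min_le_left _ _)
  have hh2 : h < 1/2 := hh1.trans_le (min_le_right _ _)
  set s : ℝ := Real.sqrt h with hsdef
  have hs0 : 0 < s := Real.sqrt_pos.mpr hh0
  have hs2 : s ^ 2 = h := Real.sq_sqrt hh0.le
  have hsδ' : s < δ' := by
    have h1 : s < δ' ^ 2 := by
      have := Real.sqrt_lt_sqrt hh0.le hhδ4
      rwa [show δ' ^ 4 = (δ' ^ 2) ^ 2 by ring, Real.sqrt_sq (by positivity)] at this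
    nlinarith
  have hsδ : s < δ := hsδ'.trans_le hδ'δ
  -- positivity and continuity of the integrand
  have hden : ∀ x : ℝ, (0:ℝ) < h + x ^ 2 := fun x => by positivity
  have hf_cont : Continuous (fun x : ℝ => x ^ p / (h + x ^ 2) ^ q) := by
    apply Continuous.div (Real.continuous_rpow_const hp.le)
    · exact (continuous_const.add (continuous_pow 2)).rpow_const fun x => Or.inr hq.le
    · exact fun x => (Real.rpow_pos_of_pos (hden x) q).ne'
  have hInt : ∀ a b : ℝ, IntervalIntegrable (fun x : ℝ => x ^ p / (h + x ^ 2) ^ q) volume a b :=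
    fun a b => hf_cont.intervalIntegrable a b
  have hIoo : ∀ a b : ℝ, a ≤ b →
      (∫ x in Set.Ioo a b, x ^ p / (h + x ^ 2) ^ q) = ∫ x in a..b, x ^ p / (h + x ^ 2) ^ q := by
    intro a b hab
    rw [intervalIntegral.integral_of_le hab, MeasureTheory.integral_Ioc_eq_integral_Ioo]
  -- log facts
  have hlogh : Real.log h < 0 := Real.log_neg hh0 (by linarith)
  have habs : |Real.log h| = -Real.log h := abs_of_neg hlogh
  have hlogs : Real.log s = Real.log h / 2 := Real.log_sqrt hh0.le
  have hL2 : Real.log 2 ≤ -Real.log h := by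
    have := Real.log_le_log hh0 hh2.le
    rw [show (1/2 : ℝ) = 2⁻¹ by norm_num, Real.log_inv] at this
    linarith
  constructor
  · -- lower bound
    have step1 : (∫ x in Set.Ioo s δ', x ^ p / (h + x ^ 2) ^ q)
        ≤ ∫ x in Set.Ioo (0:ℝ) δ, x ^ p / (h + x ^ 2) ^ q := by
      apply setIntegral_mono_set
      · exact (hf_cont.integrableOn_Icc).mono_set Set.Ioo_subset_Icc_self
      · refine (ae_restrict_iff' measurableSet_Ioo).mpr (Filter.Eventually.of_forall ?_)
        intro x hx
        have hx0 : 0 < x := hx.1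
        positivity
      · exact (Set.Ioo_subset_Ioo hs0.le hδ'δ).eventuallyLE
    have step2 : (∫ x in s..δ', (2:ℝ) ^ (-q) * x⁻¹)
        ≤ ∫ x in s..δ', x ^ p / (h + x ^ 2) ^ q := by
      apply intervalIntegral.integral_mono_on hsδ'.le
      · have hco : ContinuousOn (fun x : ℝ => (2:ℝ) ^ (-q) * x⁻¹) (Set.uIcc s δ') := by
          rw [Set.uIcc_of_le hsδ'.le]
          exact continuousOn_const.mul (continuousOn_inv₀.mono
            (fun x hx => ne_of_gt (lt_of_lt_of_le hs0 (Set.mem_Icc.mp hx).1)))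
        exact hco.intervalIntegrable
      · exact hInt s δ'
      · intro x hx
        have hx0 : 0 < x := hs0.trans_le hx.1
        have hxs : s ≤ x := hx.1
        have hX : (0:ℝ) < x ^ (2*q) := Real.rpow_pos_of_pos hx0 _
        have hT : (0:ℝ) < (2:ℝ) ^ q := Real.rpow_pos_of_pos (by norm_num) _
        have e1 : x ^ p / ((2:ℝ) ^ q * x ^ (2*q)) = (2:ℝ) ^ (-q) * x⁻¹ := by
          have h1 : x ^ p = x⁻¹ * x ^ (2*q) := by
            rw [← Real.rpow_neg_one x, ← Real.rpow_add hx0]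
            congr 1; linarith
          rw [h1, Real.rpow_neg (by norm_num : (0:ℝ) ≤ 2)]
          field_simp
        rw [← e1]
        apply div_cmp_aux (Real.rpow_nonneg hx0.le p) (Real.rpow_pos_of_pos (hden x) q)
          (by positivity)
        calc (h + x ^ 2) ^ q ≤ (2 * x ^ 2) ^ q := by
              apply Real.rpow_le_rpow (hden x).le _ hq.le
              nlinarith
          _ = (2:ℝ) ^ q * x ^ (2*q) := by
              rw [Real.mul_rpow (by norm_num) (by positivity), ← Real.rpow_natCast x 2,
                ← Real.rpow_mul hx0.le]
              norm_num [mul_comm]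
    have step3 : (∫ x in s..δ', (2:ℝ) ^ (-q) * x⁻¹)
        = (2:ℝ) ^ (-q) * (Real.log δ' - Real.log h / 2) := by
      rw [intervalIntegral.integral_const_mul, integral_inv_of_pos hs0 hδ'0,
        Real.log_div hδ'0.ne' hs0.ne', hlogs]
    have hlogδ'4 : Real.log h ≤ 4 * Real.log δ' := by
      have := Real.log_le_log hh0 hhδ4.le
      rwa [Real.log_pow, Nat.cast_ofNat] at this
    have h2q : (0:ℝ) < (2:ℝ) ^ (-q) := Real.rpow_pos_of_pos (by norm_num) _
    rw [hIoo 0 δ hδ.le] at step1 ⊢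
    rw [hIoo s δ' hsδ'.le] at step1
    have key : c * |Real.log h| ≤ (2:ℝ) ^ (-q) * (Real.log δ' - Real.log h / 2) := by
      rw [habs, hcdef]
      have h4 : 0 ≤ Real.log δ' - Real.log h / 4 := by linarith
      nlinarith [mul_nonneg h2q.le h4]
    rw [step3] at step2
    linarith [key.trans step2, step1]
  · -- upper bound
    rw [hIoo 0 δ hδ.le,
      ← intervalIntegral.integral_add_adjacent_intervals (hInt 0 s) (hInt s δ)]
    have part1 : (∫ x in (0:ℝ)..s, x ^ p / (h + x ^ 2) ^ q) ≤ 1 / (p + 1) := by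
      have step : (∫ x in (0:ℝ)..s, x ^ p / (h + x ^ 2) ^ q)
          ≤ ∫ x in (0:ℝ)..s, x ^ p / h ^ q := by
        apply intervalIntegral.integral_mono_on hs0.le (hInt 0 s)
        · exact (Continuous.div_const (Real.continuous_rpow_const hp.le) _).intervalIntegrable _ _
        · intro x hx
          apply div_cmp_aux (Real.rpow_nonneg hx.1 p) (Real.rpow_pos_of_pos hh0 q)
            (Real.rpow_pos_of_pos (hden x) q)
          exact Real.rpow_le_rpow hh0.le (by nlinarith) hq.le
      have calc1 : (∫ x in (0:ℝ)..s, x ^ p / h ^ q) = 1 / (p + 1) := by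
        rw [intervalIntegral.integral_div, integral_rpow (Or.inl (by linarith : (-1:ℝ) < p)),
          Real.zero_rpow (by linarith : p + 1 ≠ 0)]
        have hs' : s ^ (p+1) = h ^ q := by
          rw [hsdef, Real.sqrt_eq_rpow, ← Real.rpow_mul hh0.le]
          congr 1; linarith
        rw [hs']
        have hhq : (0:ℝ) < h ^ q := Real.rpow_pos_of_pos hh0 q
        field_simp
        ring
      linarith
    have part2 : (∫ x in s..δ, x ^ p / (h + x ^ 2) ^ q)
        ≤ Real.log δ - Real.log h / 2 := by
      have step : (∫ x in s..δ, x ^ p / (h + x ^ 2) ^ q) ≤ ∫ x in s..δ, x⁻¹ := by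
        apply intervalIntegral.integral_mono_on hsδ.le (hInt s δ)
        · have hco : ContinuousOn (fun x : ℝ => x⁻¹) (Set.uIcc s δ) := by
            rw [Set.uIcc_of_le hsδ.le]
            exact continuousOn_inv₀.mono
              (fun x hx => ne_of_gt (lt_of_lt_of_le hs0 (Set.mem_Icc.mp hx).1))
          exact hco.intervalIntegrable
        · intro x hx
          have hx0 : 0 < x := hs0.trans_le hx.1
          have e1 : x ^ p / x ^ (2*q) = x⁻¹ := by
            rw [← Real.rpow_sub hx0, show p - 2*q = -1 by linarith, Real.rpow_neg_one]
          rw [← e1]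
          apply div_cmp_aux (Real.rpow_nonneg hx0.le p) (Real.rpow_pos_of_pos hx0 _)
            (Real.rpow_pos_of_pos (hden x) q)
          calc x ^ (2*q) = (x ^ 2) ^ q := by
                rw [← Real.rpow_natCast x 2, ← Real.rpow_mul hx0.le]; norm_num [mul_comm]
            _ ≤ (h + x ^ 2) ^ q := Real.rpow_le_rpow (by positivity) (by linarith) hq.le
      have calc2 : (∫ x in s..δ, x⁻¹) = Real.log δ - Real.log h / 2 := by
        rw [integral_inv_of_pos hs0 hδ, Real.log_div hδ.ne' hs0.ne', hlogs]
      linarith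
    have hKbound : K ≤ K / Real.log 2 * (-Real.log h) := by
      rw [div_mul_eq_mul_div, le_div_iff₀ hlog2]
      nlinarith
    have hcabs : 0 ≤ c * (-Real.log h) := by nlinarith
    have hlogδK : Real.log δ ≤ |Real.log δ| := le_abs_self _
    rw [habs]
    simp only [hCdef, hKdef] at hKbound ⊢
    linarith
end

section
/- The vector field φ̃_h is divergence-free on the cusp region: for every x ∈ Ω_{h,δ} with √(x₁²+x₂²) > 0, one has ∂₁φ̃_h¹(x) + ∂₂φ̃_h²(x) + ∂₃φ̃_h³(x) = 0. -/
open Real MeasureTheory intervalIntegral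

noncomputable section

/-- `γ_s(r) = 1 - √(1 - r²)`. -/
def gam (r : ℝ) : ℝ := 1 - Real.sqrt (1 - r ^ 2)

/-- `α_P(r) = (h + γ_s(r)) / β_Ω`. -/
def aP (βΩ h r : ℝ) : ℝ := (h + gam r) / βΩ

/-- `α_S(r) = (1/β_S + 2) (h + γ_s(r))`. -/
def aS (βS h r : ℝ) : ℝ := (1 / βS + 2) * (h + gam r)

/-- The cubic `Φ(r,t) = P₁(r) t + P₂(r) t² + P₃(r) t³` of the slip case. -/
def Phi (βS βΩ h r t : ℝ) : ℝ :=
  6 * (2 + aS βS h r) / (12 + 4 * (aS βS h r + aP βΩ h r) + aS βS h r * aP βΩ h r) * t +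
  3 * (2 + aS βS h r) * aP βΩ h r / (12 + 4 * (aS βS h r + aP βΩ h r) + aS βS h r * aP βΩ h r) * t ^ 2 +
  -(2 * (aS βS h r + aS βS h r * aP βΩ h r + aP βΩ h r)) / (12 + 4 * (aS βS h r + aP βΩ h r) + aS βS h r * aP βΩ h r) * t ^ 3

/-- `Ψ(r,z) = Φ(r, z / (h + γ_s(r)))`. -/
def Psi (βS βΩ h r z : ℝ) : ℝ := Phi βS βΩ h r (z / (h + gam r))

/-- Partial derivative in the first (`r`) variable. -/
def dR (f : ℝ → ℝ → ℝ) : ℝ → ℝ → ℝ := fun r z => deriv (fun r' => f r' z) r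

/-- Partial derivative in the second (`z`) variable. -/
def dZ (f : ℝ → ℝ → ℝ) : ℝ → ℝ → ℝ := fun r z => deriv (fun z' => f r z') z

/-- `r(x) = √(x₁² + x₂²)`. -/
def rad (x : ℝ × ℝ × ℝ) : ℝ := Real.sqrt (x.1 ^ 2 + x.2.1 ^ 2)

/-- The cusp region `Ω_{h,δ} = {x : 0 < x₃ < h + γ_s(r), r < δ}`. -/
def Omg (h δ : ℝ) : Set (ℝ × ℝ × ℝ) :=
  {x | 0 < x.2.2 ∧ x.2.2 < h + gam (rad x) ∧ rad x < δ}

/-- First component of the test field `φ̃_h`. -/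
def tphi1 (βS βΩ h : ℝ) (x : ℝ × ℝ × ℝ) : ℝ :=
  1 / 2 * (-x.1 * dZ (Psi βS βΩ h) (rad x) x.2.2)

/-- Second component of the test field `φ̃_h`. -/
def tphi2 (βS βΩ h : ℝ) (x : ℝ × ℝ × ℝ) : ℝ :=
  1 / 2 * (-x.2.1 * dZ (Psi βS βΩ h) (rad x) x.2.2)

/-- Third component of the test field `φ̃_h`: `(1/(2r)) ∂_r[r² Ψ(r,z)]` at `z = x₃`. -/
def tphi3 (βS βΩ h : ℝ) (x : ℝ × ℝ × ℝ) : ℝ :=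
  1 / 2 * (1 / rad x * deriv (fun r' => r' ^ 2 * Psi βS βΩ h r' x.2.2) (rad x))

/-- Partial derivative `∂₁` of a function on `ℝ³`. -/
def p1 (f : ℝ × ℝ × ℝ → ℝ) (x : ℝ × ℝ × ℝ) : ℝ := deriv (fun s => f (s, x.2.1, x.2.2)) x.1

/-- Partial derivative `∂₂` of a function on `ℝ³`. -/
def p2 (f : ℝ × ℝ × ℝ → ℝ) (x : ℝ × ℝ × ℝ) : ℝ := deriv (fun s => f (x.1, s, x.2.2)) x.2.1

/-- Partial derivative `∂₃` of a function on `ℝ³`. -/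
def p3 (f : ℝ × ℝ × ℝ → ℝ) (x : ℝ × ℝ × ℝ) : ℝ := deriv (fun s => f (x.1, x.2.1, s)) x.2.2

/-!
With `r = √(x₁² + x₂²)` one has `∂ᵢ r = xᵢ / r`, so the horizontal part of the divergence of
`φ̃_h` is `-(∂_z Ψ + r ∂_r ∂_z Ψ)` (the factor `1/2` aside), while the vertical part is
`(1/r) ∂_z ∂_r (r² Ψ) = 2 ∂_z Ψ + r ∂_z ∂_r Ψ`. Hence the divergence vanishes wherever the mixed
partials of `Ψ` agree. This holds for `Ψ(r, z) = Σ_k P_k(r) (h + γ_s(r))^{-k} z^k`, since the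
coefficients are differentiable in `r` for `r < 1` (there `Δ > 0` and `h + γ_s > 0`).
-/

lemma hasDerivAt_sqrt_sq_add_sq {a b : ℝ} (hab : a ^ 2 + b ^ 2 ≠ 0) :
    HasDerivAt (fun s => √(s ^ 2 + b ^ 2)) (a / √(a ^ 2 + b ^ 2)) a := by
  have hinner : HasDerivAt (fun s : ℝ => s ^ 2 + b ^ 2) (2 * a) a := by
    simpa using (hasDerivAt_pow 2 a).add_const (b ^ 2)
  convert hinner.sqrt hab using 1
  field_simp

lemma hasDerivAt_rad_fst {x : ℝ × ℝ × ℝ} (hx : 0 < rad x) :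
    HasDerivAt (fun s => rad (s, x.2.1, x.2.2)) (x.1 / rad x) x.1 :=
  hasDerivAt_sqrt_sq_add_sq (Real.sqrt_pos.mp hx).ne'

lemma hasDerivAt_rad_snd {x : ℝ × ℝ × ℝ} (hx : 0 < rad x) :
    HasDerivAt (fun s => rad (x.1, s, x.2.2)) (x.2.1 / rad x) x.2.1 := by
  simp only [rad, add_comm (x.1 ^ 2)] at hx ⊢
  exact hasDerivAt_sqrt_sq_add_sq (Real.sqrt_pos.mp hx).ne'

-- `tphiᵢ βS βΩ h` is `streamFieldᵢ (Psi βS βΩ h)` by definition.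
section StreamField

variable (Ψ : ℝ → ℝ → ℝ)

def streamField1 (x : ℝ × ℝ × ℝ) : ℝ := 1 / 2 * (-x.1 * dZ Ψ (rad x) x.2.2)

def streamField2 (x : ℝ × ℝ × ℝ) : ℝ := 1 / 2 * (-x.2.1 * dZ Ψ (rad x) x.2.2)

def streamField3 (x : ℝ × ℝ × ℝ) : ℝ :=
  1 / 2 * (1 / rad x * deriv (fun r => r ^ 2 * Ψ r x.2.2) (rad x))

variable {Ψ} {x : ℝ × ℝ × ℝ} {Ψrz : ℝ}

lemma hasDerivAt_streamField1 (hx : 0 < rad x)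
    (hzr : HasDerivAt (fun r => dZ Ψ r x.2.2) Ψrz (rad x)) :
    HasDerivAt (fun s => streamField1 Ψ (s, x.2.1, x.2.2))
      (1 / 2 * (-dZ Ψ (rad x) x.2.2 - x.1 ^ 2 / rad x * Ψrz)) x.1 := by
  refine (((hasDerivAt_id x.1).neg.mul (hzr.comp x.1 (hasDerivAt_rad_fst hx))).const_mul
    (1 / 2)).congr_deriv ?_
  simp only [Function.comp, Pi.neg_apply, id]
  ring

lemma hasDerivAt_streamField2 (hx : 0 < rad x)
    (hzr : HasDerivAt (fun r => dZ Ψ r x.2.2) Ψrz (rad x)) :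
    HasDerivAt (fun s => streamField2 Ψ (x.1, s, x.2.2))
      (1 / 2 * (-dZ Ψ (rad x) x.2.2 - x.2.1 ^ 2 / rad x * Ψrz)) x.2.1 := by
  refine (((hasDerivAt_id x.2.1).neg.mul (hzr.comp x.2.1 (hasDerivAt_rad_snd hx))).const_mul
    (1 / 2)).congr_deriv ?_
  simp only [Function.comp, Pi.neg_apply, id]
  ring

lemma hasDerivAt_streamField3 {Ψr : ℝ → ℝ} (hx : 0 < rad x)
    (hr : ∀ z, HasDerivAt (fun r => Ψ r z) (Ψr z) (rad x)) (hrz : HasDerivAt Ψr Ψrz x.2.2)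
    (hz : DifferentiableAt ℝ (Ψ (rad x)) x.2.2) :
    HasDerivAt (fun s => streamField3 Ψ (x.1, x.2.1, s))
      (1 / 2 * (2 * dZ Ψ (rad x) x.2.2 + rad x * Ψrz)) x.2.2 := by
  have hradial : ∀ z, deriv (fun r => r ^ 2 * Ψ r z) (rad x) =
      2 * rad x * Ψ (rad x) z + rad x ^ 2 * Ψr z := fun z => by
    have h : HasDerivAt (fun r => r ^ 2 * Ψ r z) (2 * rad x * Ψ (rad x) z + rad x ^ 2 * Ψr z)
        (rad x) := ((hasDerivAt_pow 2 (rad x)).mul (hr z)).congr_deriv (by ring)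
    exact h.deriv
  have hfun : (fun s => streamField3 Ψ (x.1, x.2.1, s)) =
      fun s => 1 / 2 * (1 / rad x * (2 * rad x * Ψ (rad x) s + rad x ^ 2 * Ψr s)) := by
    funext s
    exact congrArg (fun d => 1 / 2 * (1 / rad x * d)) (hradial s)
  rw [hfun]
  refine ((((hz.hasDerivAt.const_mul (2 * rad x)).add (hrz.const_mul (rad x ^ 2))).const_mul
    (1 / rad x)).const_mul (1 / 2)).congr_deriv ?_
  simp only [dZ]
  field_simp

/-- `Ψr` is `∂_r Ψ(rad x, ·)`; sharing `Ψrz` between `hrz` and `hzr` is the equality of the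
mixed partials of `Ψ` at `(rad x, x₃)`. -/
theorem streamField_div_eq_zero {Ψr : ℝ → ℝ} (hx : 0 < rad x)
    (hr : ∀ z, HasDerivAt (fun r => Ψ r z) (Ψr z) (rad x)) (hrz : HasDerivAt Ψr Ψrz x.2.2)
    (hzr : HasDerivAt (fun r => dZ Ψ r x.2.2) Ψrz (rad x))
    (hz : DifferentiableAt ℝ (Ψ (rad x)) x.2.2) :
    p1 (streamField1 Ψ) x + p2 (streamField2 Ψ) x + p3 (streamField3 Ψ) x = 0 := by
  rw [p1, p2, p3, (hasDerivAt_streamField1 hx hzr).deriv, (hasDerivAt_streamField2 hx hzr).deriv,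
    (hasDerivAt_streamField3 hx hr hrz hz).deriv]
  have hrad : x.1 ^ 2 + x.2.1 ^ 2 = rad x ^ 2 := (Real.sq_sqrt (by positivity)).symm
  field_simp
  linear_combination (-Ψrz) * hrad

end StreamField

section Separable

variable {ι : Type*} {s : Finset ι} {q p : ι → ℝ → ℝ}

lemma dZ_sum_mul {z : ℝ} (hp : ∀ k ∈ s, DifferentiableAt ℝ (p k) z) (r : ℝ) :
    dZ (fun r z => ∑ k ∈ s, q k r * p k z) r z = ∑ k ∈ s, q k r * deriv (p k) z :=
  (HasDerivAt.fun_sum fun k hk => (hp k hk).hasDerivAt.const_mul (q k r)).deriv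

theorem streamField_div_eq_zero_of_sum_mul {Ψ : ℝ → ℝ → ℝ}
    (hΨ : ∀ r z, Ψ r z = ∑ k ∈ s, q k r * p k z) {x : ℝ × ℝ × ℝ} (hx : 0 < rad x)
    (hq : ∀ k ∈ s, DifferentiableAt ℝ (q k) (rad x))
    (hp : ∀ k ∈ s, DifferentiableAt ℝ (p k) x.2.2) :
    p1 (streamField1 Ψ) x + p2 (streamField2 Ψ) x + p3 (streamField3 Ψ) x = 0 := by
  obtain rfl : Ψ = fun r z => ∑ k ∈ s, q k r * p k z := funext fun r => funext (hΨ r)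
  refine streamField_div_eq_zero (Ψr := fun z => ∑ k ∈ s, deriv (q k) (rad x) * p k z)
    (Ψrz := ∑ k ∈ s, deriv (q k) (rad x) * deriv (p k) x.2.2) hx
    (fun z => HasDerivAt.fun_sum fun k hk => (hq k hk).hasDerivAt.mul_const (p k z))
    (HasDerivAt.fun_sum fun k hk => (hp k hk).hasDerivAt.const_mul _) ?_
    (HasDerivAt.fun_sum fun k hk => (hp k hk).hasDerivAt.const_mul _).differentiableAt
  simp only [dZ_sum_mul hp]
  exact HasDerivAt.fun_sum fun k hk => (hq k hk).hasDerivAt.mul_const _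

end Separable

lemma gam_nonneg (r : ℝ) : 0 ≤ gam r := by
  have : √(1 - r ^ 2) ≤ 1 := Real.sqrt_le_one.mpr (by nlinarith [sq_nonneg r])
  unfold gam; linarith

lemma differentiableAt_gam {r : ℝ} (hr : r ^ 2 < 1) : DifferentiableAt ℝ gam r := by
  unfold gam
  fun_prop (disch := linarith)

def phiDenom (βS βΩ h r : ℝ) : ℝ :=
  12 + 4 * (aS βS h r + aP βΩ h r) + aS βS h r * aP βΩ h r

/-- `phiCoeff k` is the paper's `P_k` and `phiDenom` its `Δ`. -/
def phiCoeff (βS βΩ h : ℝ) : ℕ → ℝ → ℝ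
  | 0 => 0
  | 1 => fun r => 6 * (2 + aS βS h r) / phiDenom βS βΩ h r
  | 2 => fun r => 3 * (2 + aS βS h r) * aP βΩ h r / phiDenom βS βΩ h r
  | 3 => fun r =>
    -(2 * (aS βS h r + aS βS h r * aP βΩ h r + aP βΩ h r)) / phiDenom βS βΩ h r
  | _ + 4 => 0

lemma Phi_eq_sum (βS βΩ h r t : ℝ) :
    Phi βS βΩ h r t = ∑ k ∈ Finset.range 4, phiCoeff βS βΩ h k r * t ^ k := by
  simp [Finset.sum_range_succ, Phi, phiCoeff, phiDenom]

lemma Psi_eq_sum (βS βΩ h r z : ℝ) :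
    Psi βS βΩ h r z =
      ∑ k ∈ Finset.range 4, phiCoeff βS βΩ h k r / (h + gam r) ^ k * z ^ k := by
  rw [Psi, Phi_eq_sum]
  refine Finset.sum_congr rfl fun k _ => ?_
  rw [div_pow]; ring

section Coefficients

variable {βS βΩ h : ℝ}

lemma phiDenom_pos (hβS : 0 < βS) (hβΩ : 0 < βΩ) (hh : 0 < h) (r : ℝ) :
    0 < phiDenom βS βΩ h r := by
  have hu : 0 < h + gam r := by linarith [gam_nonneg r]
  have : 0 < aS βS h r := mul_pos (by positivity) hu
  have : 0 < aP βΩ h r := div_pos hu hβΩ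
  unfold phiDenom; positivity

lemma differentiableAt_phiCoeff (hβS : 0 < βS) (hβΩ : 0 < βΩ) (hh : 0 < h) {r : ℝ}
    (hr : r ^ 2 < 1) (k : ℕ) :
    DifferentiableAt ℝ (phiCoeff βS βΩ h k) r := by
  have hgam := differentiableAt_gam hr
  have haS : DifferentiableAt ℝ (aS βS h) r := by unfold aS; fun_prop
  have haP : DifferentiableAt ℝ (aP βΩ h) r := by unfold aP; fun_prop
  have hD : DifferentiableAt ℝ (phiDenom βS βΩ h) r := by unfold phiDenom; fun_prop
  have hD0 := (phiDenom_pos hβS hβΩ hh r).ne'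
  rcases k with _ | _ | _ | _ | k <;> simp only [phiCoeff] <;> fun_prop (disch := exact hD0)

end Coefficients

/-- The test field `φ̃_h` is divergence-free on the cusp region (away from the axis). -/
theorem tphi_divergence_free (δ βS βΩ h : ℝ) (hδ : δ ∈ Set.Ioo (0 : ℝ) (1 / 4))
    (hβS : 0 < βS) (hβΩ : 0 < βΩ) (hh : 0 < h) :
    ∀ x ∈ Omg h δ, 0 < rad x →
      p1 (tphi1 βS βΩ h) x + p2 (tphi2 βS βΩ h) x + p3 (tphi3 βS βΩ h) x = 0 := by
  intro x hx hR
  have hR1 : rad x ^ 2 < 1 := by nlinarith [hx.2.2, hδ.2]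
  have hu : h + gam (rad x) ≠ 0 := by linarith [gam_nonneg (rad x)]
  exact streamField_div_eq_zero_of_sum_mul (Psi_eq_sum βS βΩ h) hR
    (fun k _ => (differentiableAt_phiCoeff hβS hβΩ hh hR1 k).div
      (((differentiableAt_gam hR1).const_add h).pow k) (pow_ne_zero k hu))
    (fun k _ => differentiableAt_pow k)
end
end

section
/- There exists a constant C > 0, depending only on δ, β_S, β_Ω, such that for all h ∈ (0,1/4) and each component index i ∈ {1,2,3}: ∫_{Ω_{h,δ}} |∫_{x₃}^{h+γ_s(r)} ∂_hφ̃_h^i(x₁,x₂,s) ds|² dx ≤ C², where ∂_hφ̃_h^i denotes the derivative of the family h ↦ φ̃_h^i with respect to the parameter h, and r = √(x₁²+x₂²). -/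
open Real MeasureTheory intervalIntegral

noncomputable section

/-- The components of the test field `φ̃_h`, indexed by `Fin 3`. -/
def tcmp (βS βΩ h : ℝ) (i : Fin 3) : ℝ × ℝ × ℝ → ℝ :=
  if i = 0 then tphi1 βS βΩ h else if i = 1 then tphi2 βS βΩ h else tphi3 βS βΩ h

/-!
Since `α_S` and `α_P` are multiples of `u = h + γ_s(r)`, `Ψ(r, z) = ∑ₖ Pₖ(u) (z/u)ᵏ` with
coefficients `Pₖ` that are smooth rational functions of `u` near `[0, 5/4]`. Sums of the shape
`∑ₖ cₖ(u) (z/u)ᵏ / uᵐ` are stable under `∂ᵤ` (which raises `m` by one) and under `∂_z`, and for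
`0 ≤ z ≤ u` they are bounded by `(∑ₖ |cₖ(u)|) / uᵐ`. As `φ̃¹, φ̃²` are `-xᵢ/2 · ∂_zΨ` and
`φ̃³ = Ψ + (r γ_s'(r)/2) ∂ᵤΨ` with `|xᵢ| ≤ r` and `r γ_s'(r) ≲ r² ≤ 2u`, this gives
`|∂ₕφ̃ⁱ| ≲ (u + r)/u²`, so the vertical primitive is `≲ 1 + r/u`. Integrating its square in `x₃`
first yields `u (1 + r/u)² = u + 2r + r²/u ≤ 4`, uniformly in `h`.
-/

open scoped ContDiff

namespace SlipCusp

def scaledPoly (c : ℕ → ℝ → ℝ) (n m : ℕ) (u z : ℝ) : ℝ :=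
  ∑ k ∈ Finset.range n, c k u * (z / u) ^ k / u ^ m

def derivCoeffLeft (c : ℕ → ℝ → ℝ) (m k : ℕ) (u : ℝ) : ℝ := u * deriv (c k) u - (k + m) * c k u

def derivCoeffRight (c : ℕ → ℝ → ℝ) (k : ℕ) (u : ℝ) : ℝ := (k + 1) * c (k + 1) u

section ScaledPoly

variable {c : ℕ → ℝ → ℝ} {n m : ℕ} {u z : ℝ}

lemma hasDerivAt_scaledTerm {f : ℝ → ℝ} {f' : ℝ} (hf : HasDerivAt f f' u) (hu : u ≠ 0)
    (k m : ℕ) (z : ℝ) :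
    HasDerivAt (fun v => f v * (z / v) ^ k / v ^ m)
      ((u * f' - (k + m) * f u) * (z / u) ^ k / u ^ (m + 1)) u := by
  refine HasDerivAt.congr_deriv (f := fun v => f v * (z / v) ^ k / v ^ m)
    ((hf.mul (((hasDerivAt_const u z).div (hasDerivAt_id u) hu).pow k)).div
      ((hasDerivAt_id u).pow m) (pow_ne_zero m hu)) ?_
  rcases k with _ | k <;> rcases m with _ | m <;>
    simp only [Pi.mul_apply, Pi.div_apply, Pi.pow_apply, div_pow, Nat.add_sub_cancel,
      Nat.cast_zero, Nat.cast_succ, id] <;>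
    field_simp <;> ring

lemma hasDerivAt_scaledPoly_left (hc : ∀ k < n, DifferentiableAt ℝ (c k) u) (hu : u ≠ 0) :
    HasDerivAt (fun v => scaledPoly c n m v z)
      (scaledPoly (derivCoeffLeft c m) n (m + 1) u z) u := by
  simpa only [scaledPoly, derivCoeffLeft] using HasDerivAt.fun_sum fun k hk =>
    hasDerivAt_scaledTerm (hc k (Finset.mem_range.1 hk)).hasDerivAt hu k m z

lemma hasDerivAt_scaledPoly_right :
    HasDerivAt (fun z => scaledPoly c (n + 1) m u z)
      (scaledPoly (derivCoeffRight c) n (m + 1) u z) z := by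
  have hterm : ∀ k : ℕ, HasDerivAt (fun z => c (k + 1) u * (z / u) ^ (k + 1) / u ^ m)
      (derivCoeffRight c k u * (z / u) ^ k / u ^ (m + 1)) z := fun k => by
    refine HasDerivAt.congr_deriv
      ((((hasDerivAt_id z).div_const u).pow (k + 1)).const_mul (c (k + 1) u) |>.div_const _) ?_
    simp only [derivCoeffRight, id, Nat.add_sub_cancel, Nat.cast_succ, pow_succ]
    ring
  have h := (HasDerivAt.fun_sum fun k (_ : k ∈ Finset.range n) => hterm k).add_const
    (c 0 u * (z / u) ^ 0 / u ^ m)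
  simpa only [scaledPoly, Finset.sum_range_succ', pow_zero, mul_one] using h

lemma abs_scaledPoly_le (hu : 0 < u) (hz : z ∈ Set.Icc 0 u) :
    |scaledPoly c n m u z| ≤ (∑ k ∈ Finset.range n, |c k u|) / u ^ m := by
  have ht : |z / u| ≤ 1 := by
    rw [abs_div, abs_of_nonneg hz.1, abs_of_pos hu]
    exact div_le_one_of_le₀ hz.2 hu.le
  rw [Finset.sum_div]
  refine (Finset.abs_sum_le_sum_abs _ _).trans (Finset.sum_le_sum fun k _ => ?_)
  rw [abs_div, abs_mul, abs_pow, abs_of_pos (pow_pos hu m)]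
  gcongr
  exact mul_le_of_le_one_right (abs_nonneg _) (pow_le_one₀ (abs_nonneg _) ht)

lemma exists_abs_scaledPoly_le {a : ℝ} (hc : ∀ k, ContinuousOn (c k) (Set.Icc 0 a)) (n m : ℕ) :
    ∃ M, 0 < M ∧ ∀ u ∈ Set.Ioc 0 a, ∀ z ∈ Set.Icc 0 u, |scaledPoly c n m u z| ≤ M / u ^ m := by
  obtain ⟨C, hC⟩ := isCompact_Icc.exists_bound_of_continuousOn
    (continuousOn_finsetSum (Finset.range n) fun k _ => (hc k).abs)
  refine ⟨max C 1, by positivity, fun u hu z hz => (abs_scaledPoly_le hu.1 hz).trans ?_⟩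
  refine div_le_div_of_nonneg_right ?_ (pow_nonneg hu.1.le m)
  exact (le_abs_self _).trans ((hC u (Set.Ioc_subset_Icc_self hu)).trans (le_max_left _ _))

variable {U : Set ℝ}

lemma contDiffOn_derivCoeffLeft (hU : IsOpen U) (hc : ∀ k, ContDiffOn ℝ ∞ (c k) U) (m k : ℕ) :
    ContDiffOn ℝ ∞ (derivCoeffLeft c m k) U :=
  (contDiffOn_id.mul ((hc k).deriv_of_isOpen hU le_rfl)).sub (contDiffOn_const.mul (hc k))

lemma contDiffOn_derivCoeffRight (hc : ∀ k, ContDiffOn ℝ ∞ (c k) U) (k : ℕ) :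
    ContDiffOn ℝ ∞ (derivCoeffRight c k) U :=
  contDiffOn_const.mul (hc (k + 1))

end ScaledPoly

lemma integral_le_integral_of_integral_fiber_le {α β γ : Type*} [MeasurableSpace α]
    [MeasurableSpace β] [MeasurableSpace γ] {μ : Measure α} {ν : Measure β} {ρ : Measure γ}
    [SFinite μ] [SFinite ν] [SFinite ρ] {F : α × β × γ → ℝ} {b : α × β → ℝ}
    (hF : Integrable F (μ.prod (ν.prod ρ))) (hb : Integrable b (μ.prod ν))
    (hle : ∀ p : α × β, ∫ z, F (p.1, p.2, z) ∂ρ ≤ b p) :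
    ∫ x, F x ∂(μ.prod (ν.prod ρ)) ≤ ∫ p, b p ∂(μ.prod ν) := by
  have e := measurePreserving_prodAssoc μ ν ρ
  have hF' : Integrable (fun x => F (MeasurableEquiv.prodAssoc x)) ((μ.prod ν).prod ρ) :=
    (e.integrable_comp_emb MeasurableEquiv.prodAssoc.measurableEmbedding).2 hF
  rw [← e.integral_comp', integral_prod _ hF']
  exact integral_mono hF'.integral_prod_left hb hle

lemma gam_nonneg (r : ℝ) : 0 ≤ gam r := by
  have : √(1 - r ^ 2) ≤ 1 := Real.sqrt_le_one.2 (by nlinarith)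
  unfold gam; linarith

lemma gam_le_one (r : ℝ) : gam r ≤ 1 := by
  unfold gam; linarith [Real.sqrt_nonneg (1 - r ^ 2)]

lemma sq_le_two_mul_gam {r : ℝ} (hr : r ^ 2 ≤ 1) : r ^ 2 ≤ 2 * gam r := by
  have : √(1 - r ^ 2) ≤ 1 - r ^ 2 / 2 :=
    Real.sqrt_le_iff.2 ⟨by nlinarith, by nlinarith⟩
  unfold gam; linarith

lemma hasDerivAt_gam {r : ℝ} (hr : r ^ 2 < 1) : HasDerivAt gam (r / √(1 - r ^ 2)) r := by
  have hsq := ((hasDerivAt_pow 2 r).const_sub 1).sqrt (by linarith)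
  refine (hsq.const_sub 1).congr_deriv ?_
  field_simp
  ring

lemma rad_nonneg (x : ℝ × ℝ × ℝ) : 0 ≤ rad x := Real.sqrt_nonneg _

lemma abs_fst_le_rad (x : ℝ × ℝ × ℝ) : |x.1| ≤ rad x :=
  Real.abs_le_sqrt (by nlinarith)

lemma abs_snd_le_rad (x : ℝ × ℝ × ℝ) : |x.2.1| ≤ rad x :=
  Real.abs_le_sqrt (by nlinarith)

-- `Pₖ = slipNum k / slipDen` as functions of `u = h + γ_s(r)`, i.e. with `α_S = (1/β_S + 2) u` and
-- `α_P = u / β_Ω`.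
def slipNum (βS βΩ : ℝ) : ℕ → ℝ → ℝ
  | 1, u => 6 * (2 + (1 / βS + 2) * u)
  | 2, u => 3 * (2 + (1 / βS + 2) * u) * (u / βΩ)
  | 3, u => -(2 * ((1 / βS + 2) * u + (1 / βS + 2) * u * (u / βΩ) + u / βΩ))
  | _, _ => 0

def slipDen (βS βΩ u : ℝ) : ℝ := 12 + 4 * ((1 / βS + 2) * u + u / βΩ) + (1 / βS + 2) * u * (u / βΩ)

def slipCoeff (βS βΩ : ℝ) (k : ℕ) (u : ℝ) : ℝ := slipNum βS βΩ k u / slipDen βS βΩ u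

section SlipCoefficients

variable {βS βΩ : ℝ}

lemma Psi_eq_scaledPoly (h r z : ℝ) :
    Psi βS βΩ h r z = scaledPoly (slipCoeff βS βΩ) 4 0 (h + gam r) z := by
  simp only [Psi, Phi, aS, aP, scaledPoly, slipCoeff, slipNum, slipDen, Finset.sum_range_succ,
    Finset.sum_range_zero]
  ring

lemma slipDen_pos (hβS : 0 ≤ βS) (hβΩ : 0 ≤ βΩ) {u : ℝ} (hu : 0 ≤ u) : 0 < slipDen βS βΩ u := by
  unfold slipDen; positivity

lemma isOpen_slipDen_ne_zero : IsOpen {u | slipDen βS βΩ u ≠ 0} :=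
  isOpen_ne_fun (by unfold slipDen; fun_prop) continuous_const

lemma contDiffOn_slipCoeff (k : ℕ) :
    ContDiffOn ℝ ∞ (slipCoeff βS βΩ k) {u | slipDen βS βΩ u ≠ 0} := by
  refine ContDiffOn.div ?_ (by unfold slipDen; fun_prop) fun u hu => hu
  rcases k with _ | _ | _ | _ | k
  all_goals unfold slipNum
  all_goals fun_prop

end SlipCoefficients

section TestField

variable {βS βΩ : ℝ}

lemma differentiableAt_of_contDiffOn_slipDen {f : ℝ → ℝ}
    (hf : ContDiffOn ℝ ∞ f {u | slipDen βS βΩ u ≠ 0}) (hβS : 0 ≤ βS) (hβΩ : 0 ≤ βΩ) {u : ℝ}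
    (hu : 0 ≤ u) : DifferentiableAt ℝ f u :=
  (hf.contDiffAt (isOpen_slipDen_ne_zero.mem_nhds (slipDen_pos hβS hβΩ hu).ne')).differentiableAt
    (by simp)

lemma dZ_Psi (h r z : ℝ) :
    dZ (Psi βS βΩ h) r z = scaledPoly (derivCoeffRight (slipCoeff βS βΩ)) 3 1 (h + gam r) z := by
  simp only [dZ, Psi_eq_scaledPoly]
  exact hasDerivAt_scaledPoly_right.deriv

lemma hasDerivAt_dZ_Psi (hβS : 0 ≤ βS) (hβΩ : 0 ≤ βΩ) {h r : ℝ} (hu : 0 < h + gam r) (z : ℝ) :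
    HasDerivAt (fun h' => dZ (Psi βS βΩ h') r z)
      (scaledPoly (derivCoeffLeft (derivCoeffRight (slipCoeff βS βΩ)) 1) 3 2 (h + gam r) z) h := by
  simp only [dZ_Psi]
  refine HasDerivAt.comp_add_const h (gam r) (hasDerivAt_scaledPoly_left (fun k _ => ?_) hu.ne')
  exact differentiableAt_of_contDiffOn_slipDen
    (contDiffOn_derivCoeffRight contDiffOn_slipCoeff k) hβS hβΩ hu.le

lemma tphi3_eq (hβS : 0 ≤ βS) (hβΩ : 0 ≤ βΩ) {h : ℝ} {x : ℝ × ℝ × ℝ} (hr : 0 < rad x)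
    (hr1 : rad x ^ 2 < 1) (hu : 0 < h + gam (rad x)) :
    tphi3 βS βΩ h x = scaledPoly (slipCoeff βS βΩ) 4 0 (h + gam (rad x)) x.2.2 +
      rad x ^ 2 / (2 * √(1 - rad x ^ 2)) *
        scaledPoly (derivCoeffLeft (slipCoeff βS βΩ) 0) 4 1 (h + gam (rad x)) x.2.2 := by
  rw [tphi3]
  set r := rad x
  have hS : HasDerivAt (fun r' => Psi βS βΩ h r' x.2.2)
      (scaledPoly (derivCoeffLeft (slipCoeff βS βΩ) 0) 4 1 (h + gam r) x.2.2 *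
        (r / √(1 - r ^ 2))) r := by
    simp only [Psi_eq_scaledPoly]
    refine HasDerivAt.comp r (hasDerivAt_scaledPoly_left (fun k _ => ?_) hu.ne')
      ((hasDerivAt_gam hr1).const_add h)
    exact differentiableAt_of_contDiffOn_slipDen (contDiffOn_slipCoeff k) hβS hβΩ hu.le
  have hprod : HasDerivAt (fun r' => r' ^ 2 * Psi βS βΩ h r' x.2.2) _ r :=
    (hasDerivAt_pow 2 r).mul hS
  have hsq : 0 < √(1 - r ^ 2) := Real.sqrt_pos.2 (by linarith)
  rw [hprod.deriv, Psi_eq_scaledPoly]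
  field_simp
  ring

lemma hasDerivAt_tphi3 (hβS : 0 ≤ βS) (hβΩ : 0 ≤ βΩ) {h : ℝ} {x : ℝ × ℝ × ℝ} (hr : 0 < rad x)
    (hr1 : rad x ^ 2 < 1) (hu : 0 < h + gam (rad x)) :
    HasDerivAt (fun h' => tphi3 βS βΩ h' x)
      (scaledPoly (derivCoeffLeft (slipCoeff βS βΩ) 0) 4 1 (h + gam (rad x)) x.2.2 +
        rad x ^ 2 / (2 * √(1 - rad x ^ 2)) *
          scaledPoly (derivCoeffLeft (derivCoeffLeft (slipCoeff βS βΩ) 0) 1) 4 2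
            (h + gam (rad x)) x.2.2) h := by
  set r := rad x
  have hS := (hasDerivAt_scaledPoly_left (n := 4) (m := 0) (z := x.2.2) (fun k _ =>
    differentiableAt_of_contDiffOn_slipDen (contDiffOn_slipCoeff k) hβS hβΩ hu.le)
      hu.ne').comp_add_const h (gam r)
  have hSu := (hasDerivAt_scaledPoly_left (n := 4) (m := 1) (z := x.2.2) (fun k _ =>
    differentiableAt_of_contDiffOn_slipDen
      (contDiffOn_derivCoeffLeft isOpen_slipDen_ne_zero contDiffOn_slipCoeff 0 k) hβS hβΩ hu.le)
      hu.ne').comp_add_const h (gam r)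
  refine (hS.add (hSu.const_mul _)).congr_of_eventuallyEq ?_
  filter_upwards [(isOpen_lt continuous_const (continuous_add_const (gam r))).mem_nhds hu]
    with h' hu'
  exact tphi3_eq hβS hβΩ hr hr1 hu'

-- On the axis `x₁ = x₂ = 0`; for `φ̃³` this is the convention `1 / 0 = 0`.
lemma tcmp_eq_zero_of_rad_eq_zero {x : ℝ × ℝ × ℝ} (hr : rad x = 0) (h : ℝ) (i : Fin 3) :
    tcmp βS βΩ h i x = 0 := by
  have h1 : x.1 = 0 := abs_nonpos_iff.1 (hr ▸ abs_fst_le_rad x)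
  have h2 : x.2.1 = 0 := abs_nonpos_iff.1 (hr ▸ abs_snd_le_rad x)
  fin_cases i <;> simp [tcmp, tphi1, tphi2, tphi3, hr, h1, h2]

lemma abs_deriv_lateral_le (hβS : 0 ≤ βS) (hβΩ : 0 ≤ βΩ) {h r z y M : ℝ}
    (hu : 0 < h + gam r) (hy : |y| ≤ r)
    (hW : |scaledPoly (derivCoeffLeft (derivCoeffRight (slipCoeff βS βΩ)) 1) 3 2 (h + gam r) z| ≤
      M / (h + gam r) ^ 2) :
    |deriv (fun h' => 1 / 2 * (-y * dZ (Psi βS βΩ h') r z)) h| ≤ M * r / 2 / (h + gam r) ^ 2 := by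
  rw [(((hasDerivAt_dZ_Psi hβS hβΩ hu z).const_mul (-y)).const_mul (1 / 2)).deriv,
    abs_mul, abs_mul, abs_neg, abs_of_pos (one_half_pos (α := ℝ))]
  calc 1 / 2 * (|y| * |_|) ≤ 1 / 2 * (r * (M / (h + gam r) ^ 2)) := by
        gcongr
        exact (abs_nonneg _).trans hy
    _ = M * r / 2 / (h + gam r) ^ 2 := by ring

lemma abs_deriv_tphi3_le (hβS : 0 ≤ βS) (hβΩ : 0 ≤ βΩ) {h M₂ M₃ : ℝ} {x : ℝ × ℝ × ℝ}
    (hh : 0 < h) (hr : 0 < rad x) (hr2 : rad x ≤ 1 / 2)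
    (hSu : |scaledPoly (derivCoeffLeft (slipCoeff βS βΩ) 0) 4 1 (h + gam (rad x)) x.2.2| ≤
      M₂ / (h + gam (rad x)) ^ 1)
    (hSuu : |scaledPoly (derivCoeffLeft (derivCoeffLeft (slipCoeff βS βΩ) 0) 1) 4 2
      (h + gam (rad x)) x.2.2| ≤ M₃ / (h + gam (rad x)) ^ 2) :
    |deriv (fun h' => tphi3 βS βΩ h' x) h| ≤ (M₂ + 2 * M₃) / (h + gam (rad x)) := by
  set r := rad x
  set u := h + gam r
  have hu : 0 < u := by linarith [gam_nonneg r]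
  have hr1 : r ^ 2 < 1 := by nlinarith
  -- the weight `r γ_s'(r) / 2` is at most `r² ≤ 2u`
  have hq : 0 ≤ r ^ 2 / (2 * √(1 - r ^ 2)) ∧ r ^ 2 / (2 * √(1 - r ^ 2)) ≤ 2 * u := by
    have : 1 / 2 ≤ √(1 - r ^ 2) := Real.le_sqrt_of_sq_le (by nlinarith)
    refine ⟨by positivity, (div_le_self (sq_nonneg r) (by linarith)).trans ?_⟩
    linarith [sq_le_two_mul_gam hr1.le]
  rw [(hasDerivAt_tphi3 hβS hβΩ hr hr1 hu).deriv]
  calc |_ + r ^ 2 / (2 * √(1 - r ^ 2)) * _| ≤ M₂ / u ^ 1 + 2 * u * (M₃ / u ^ 2) := by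
        refine (abs_add_le _ _).trans ?_
        rw [abs_mul, abs_of_nonneg hq.1]
        exact add_le_add hSu (mul_le_mul hq.2 hSuu (abs_nonneg _) (by linarith))
    _ = (M₂ + 2 * M₃) / u := by
        field_simp

lemma exists_abs_deriv_tcmp_le (hβS : 0 ≤ βS) (hβΩ : 0 ≤ βΩ) :
    ∃ K, 0 < K ∧ ∀ h ∈ Set.Ioc (0 : ℝ) (1 / 4), ∀ i x, rad x ≤ 1 / 2 →
      x.2.2 ∈ Set.Icc 0 (h + gam (rad x)) →
      |deriv (fun h' => tcmp βS βΩ h' i x) h| ≤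
        K * (h + gam (rad x) + rad x) / (h + gam (rad x)) ^ 2 := by
  have hU := isOpen_slipDen_ne_zero (βS := βS) (βΩ := βΩ)
  have hcont : ∀ {c : ℕ → ℝ → ℝ}, (∀ k, ContDiffOn ℝ ∞ (c k) {u | slipDen βS βΩ u ≠ 0}) →
      ∀ k, ContinuousOn (c k) (Set.Icc 0 (5 / 4)) := fun hc k =>
    (hc k).continuousOn.mono fun u hu => (slipDen_pos hβS hβΩ hu.1).ne'
  obtain ⟨M₁, hM₁, hW⟩ := exists_abs_scaledPoly_le (hcont
    (contDiffOn_derivCoeffLeft hU (contDiffOn_derivCoeffRight contDiffOn_slipCoeff) 1)) 3 2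
  obtain ⟨M₂, hM₂, hSu⟩ := exists_abs_scaledPoly_le
    (hcont (contDiffOn_derivCoeffLeft hU contDiffOn_slipCoeff 0)) 4 1
  obtain ⟨M₃, hM₃, hSuu⟩ := exists_abs_scaledPoly_le (hcont
    (contDiffOn_derivCoeffLeft hU (contDiffOn_derivCoeffLeft hU contDiffOn_slipCoeff 0) 1)) 4 2
  refine ⟨M₁ + M₂ + 2 * M₃, by positivity, fun h hh i x hr hz => ?_⟩
  set r := rad x
  set u := h + gam r
  have hu : u ∈ Set.Ioc 0 (5 / 4) :=
    ⟨by linarith [gam_nonneg r, hh.1], by linarith [gam_le_one r, hh.2]⟩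
  rcases (rad_nonneg x).eq_or_lt with hr0 | hr0
  · simp only [tcmp_eq_zero_of_rad_eq_zero hr0.symm, deriv_const, abs_zero]
    have := hu.1
    positivity
  have hlateral : ∀ y, |y| ≤ r →
      |deriv (fun h' => 1 / 2 * (-y * dZ (Psi βS βΩ h') r x.2.2)) h| ≤
        (M₁ + M₂ + 2 * M₃) * (u + r) / u ^ 2 := fun y hy =>
    (abs_deriv_lateral_le hβS hβΩ hu.1 hy (hW u hu _ hz)).trans
      (by gcongr; nlinarith [hu.1])
  fin_cases i
  · exact hlateral x.1 (abs_fst_le_rad x)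
  · exact hlateral x.2.1 (abs_snd_le_rad x)
  · calc _ ≤ (M₂ + 2 * M₃) / u :=
          abs_deriv_tphi3_le hβS hβΩ hh.1 hr0 hr (hSu u hu _ hz) (hSuu u hu _ hz)
      _ = (M₂ + 2 * M₃) * u / u ^ 2 := by field_simp
      _ ≤ (M₁ + M₂ + 2 * M₃) * (u + r) / u ^ 2 := by
          gcongr ?_ / _
          nlinarith [hu.1]

lemma exists_abs_primitive_le (hβS : 0 ≤ βS) (hβΩ : 0 ≤ βΩ) :
    ∃ K, 0 < K ∧ ∀ h ∈ Set.Ioc (0 : ℝ) (1 / 4), ∀ i x, rad x ≤ 1 / 2 →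
      x.2.2 ∈ Set.Icc 0 (h + gam (rad x)) →
      |∫ s in x.2.2..(h + gam (rad x)), deriv (fun h' => tcmp βS βΩ h' i (x.1, x.2.1, s)) h| ≤
        K * (1 + rad x / (h + gam (rad x))) := by
  obtain ⟨K, hK, hderiv⟩ := exists_abs_deriv_tcmp_le hβS hβΩ
  refine ⟨K, hK, fun h hh i x hr hz => ?_⟩
  have hu : 0 < h + gam (rad x) := by linarith [gam_nonneg (rad x), hh.1]
  have hint := intervalIntegral.norm_integral_le_of_norm_le_const
    (f := fun s => deriv (fun h' => tcmp βS βΩ h' i (x.1, x.2.1, s)) h)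
    (C := K * (h + gam (rad x) + rad x) / (h + gam (rad x)) ^ 2) fun s hs =>
    (Real.norm_eq_abs _).le.trans <| hderiv h hh i (x.1, x.2.1, s) hr (by
      rw [Set.uIoc_of_le hz.2] at hs
      exact ⟨hz.1.trans hs.1.le, hs.2⟩)
  rw [Real.norm_eq_abs, abs_of_nonneg (sub_nonneg.2 hz.2)] at hint
  refine hint.trans ?_
  calc K * (h + gam (rad x) + rad x) / (h + gam (rad x)) ^ 2 * (h + gam (rad x) - x.2.2)
      ≤ K * (h + gam (rad x) + rad x) / (h + gam (rad x)) ^ 2 * (h + gam (rad x)) := by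
        gcongr
        · have := rad_nonneg x
          positivity
        · linarith [hz.1]
    _ = K * (1 + rad x / (h + gam (rad x))) := by
        field_simp

end TestField

lemma continuous_rad : Continuous rad := by
  unfold rad; fun_prop

lemma continuous_gam : Continuous gam := by
  unfold gam; fun_prop

lemma isOpen_Omg (h δ : ℝ) : IsOpen (Omg h δ) :=
  have hz : Continuous fun x : ℝ × ℝ × ℝ => x.2.2 := by fun_prop
  (isOpen_lt continuous_const hz).inter ((isOpen_lt hz
    (continuous_const.add (continuous_gam.comp continuous_rad))).inter
      (isOpen_lt continuous_rad continuous_const))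

lemma Omg_subset_Icc_prod (h δ : ℝ) :
    Omg h δ ⊆ Set.Icc (-δ) δ ×ˢ (Set.Icc (-δ) δ ×ˢ Set.Icc 0 (h + 1)) := by
  rintro x ⟨hz, hzu, hr⟩
  have h1 := abs_le.1 ((abs_fst_le_rad x).trans hr.le)
  have h2 := abs_le.1 ((abs_snd_le_rad x).trans hr.le)
  exact ⟨h1, h2, hz.le, by linarith [gam_le_one (rad x)]⟩

section Majorant

variable {h δ : ℝ}

lemma integrableOn_Omg_majorant (hh : 0 < h) :
    IntegrableOn (fun x => (1 + rad x / (h + gam (rad x))) ^ 2) (Omg h δ) := by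
  have hu : ∀ x, h + gam (rad x) ≠ 0 := fun x => by linarith [gam_nonneg (rad x)]
  have hcont : Continuous fun x => (1 + rad x / (h + gam (rad x))) ^ 2 :=
    (continuous_const.add (continuous_rad.div
      (continuous_const.add (continuous_gam.comp continuous_rad)) hu)).pow 2
  exact (hcont.continuousOn.integrableOn_compact
    (isCompact_Icc.prod (isCompact_Icc.prod isCompact_Icc))).mono_set (Omg_subset_Icc_prod h δ)

lemma integral_Omg_majorant_fiber_le (hδ : δ ≤ 1 / 4) (hh : h ∈ Set.Ioc 0 (1 / 4)) (p : ℝ × ℝ) :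
    ∫ z, (Omg h δ).indicator (fun x => (1 + rad x / (h + gam (rad x))) ^ 2) (p.1, p.2, z) ≤
      (Set.Icc (-δ) δ ×ˢ Set.Icc (-δ) δ).indicator (fun _ => 4) p := by
  set r := rad (p.1, p.2, 0)
  have hrz : ∀ z, rad (p.1, p.2, z) = r := fun _ => rfl
  by_cases hr : r < δ
  · set u := h + gam r
    have hu : 0 < u := by linarith [gam_nonneg r, hh.1]
    have hfib : (fun z => (Omg h δ).indicator (fun x => (1 + rad x / (h + gam (rad x))) ^ 2)
        (p.1, p.2, z)) = (Set.Ioo 0 u).indicator (fun _ => (1 + r / u) ^ 2) := by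
      funext z
      simp only [Set.indicator_apply, Omg, Set.mem_ofPred_eq, Set.mem_Ioo, hrz, hr, and_true]
      rfl
    have hp : p ∈ Set.Icc (-δ) δ ×ˢ Set.Icc (-δ) δ :=
      ⟨abs_le.1 ((abs_fst_le_rad (p.1, p.2, 0)).trans hr.le),
        abs_le.1 ((abs_snd_le_rad (p.1, p.2, 0)).trans hr.le)⟩
    rw [hfib, integral_indicator_const _ measurableSet_Ioo, Real.volume_real_Ioo_of_le hu.le,
      Set.indicator_of_mem hp, smul_eq_mul]
    have hr2 : r ^ 2 ≤ 2 * u := by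
      linarith [sq_le_two_mul_gam (r := r) (by nlinarith [rad_nonneg (p.1, p.2, 0)]), hh.1]
    have hu' : u ≤ 5 / 4 := by linarith [gam_le_one r, hh.2]
    calc (u - 0) * (1 + r / u) ^ 2 = u + 2 * r + r ^ 2 / u := by field_simp; ring
      _ ≤ 4 := by
        have : r ^ 2 / u ≤ 2 := (div_le_iff₀ hu).2 (by linarith)
        linarith
  · have hfib : (fun z => (Omg h δ).indicator (fun x => (1 + rad x / (h + gam (rad x))) ^ 2)
        (p.1, p.2, z)) = fun _ => 0 :=
      funext fun z => Set.indicator_of_notMem (fun hx => hr hx.2.2) _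
    rw [hfib, MeasureTheory.integral_zero]
    exact Set.indicator_nonneg (fun _ _ => by norm_num) p

lemma integral_Omg_majorant_le (hδ : δ ∈ Set.Ioo 0 (1 / 4)) (hh : h ∈ Set.Ioc 0 (1 / 4)) :
    ∫ x in Omg h δ, (1 + rad x / (h + gam (rad x))) ^ 2 ≤ 1 := by
  have hsq : MeasurableSet (Set.Icc (-δ) δ ×ˢ Set.Icc (-δ) δ) :=
    measurableSet_Icc.prod measurableSet_Icc
  rw [← MeasureTheory.integral_indicator (isOpen_Omg h δ).measurableSet]
  calc _ ≤ ∫ p, (Set.Icc (-δ) δ ×ˢ Set.Icc (-δ) δ).indicator (fun _ => (4 : ℝ)) p :=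
        integral_le_integral_of_integral_fiber_le
          ((integrable_indicator_iff (isOpen_Omg h δ).measurableSet).2
            (integrableOn_Omg_majorant hh.1))
          ((integrable_indicator_iff hsq).2 (integrableOn_const
            (isCompact_Icc.prod isCompact_Icc).measure_lt_top.ne))
          (integral_Omg_majorant_fiber_le hδ.2.le hh)
    _ = (2 * δ) ^ 2 * 4 := by
        rw [integral_indicator_const _ hsq, Measure.volume_eq_prod, measureReal_prod_prod,
          Real.volume_real_Icc_of_le (by linarith [hδ.1]), smul_eq_mul]
        ring
    _ ≤ 1 := by nlinarith [hδ.1, hδ.2]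

end Majorant

end SlipCusp

/-- Estimate (A.5)/(3.17) (slip case): for each component `i`, the vertical primitive of
the `h`-derivative of the test field satisfies
`∫_{Ω_{h,δ}} |∫_{x₃}^{h+γ_s(r)} ∂_h φ̃_h^i(x₁,x₂,s) ds|² dx ≤ C²`. -/
theorem tphi_h_derivative_primitive_L2_bound (δ βS βΩ : ℝ)
    (hδ : δ ∈ Set.Ioo (0 : ℝ) (1 / 4)) (hβS : 0 < βS) (hβΩ : 0 < βΩ) :
    ∃ C : ℝ, 0 < C ∧ ∀ h ∈ Set.Ioo (0 : ℝ) (1 / 4), ∀ i : Fin 3,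
      (∫ x in Omg h δ,
          (∫ s in x.2.2..(h + gam (rad x)),
            deriv (fun h' => tcmp βS βΩ h' i (x.1, x.2.1, s)) h) ^ 2) ≤
        C ^ 2 := by
  obtain ⟨K, hK, hprimitive⟩ := SlipCusp.exists_abs_primitive_le hβS.le hβΩ.le
  refine ⟨K, hK, fun h hh i => ?_⟩
  have hh' : h ∈ Set.Ioc 0 (1 / 4) := Set.Ioo_subset_Ioc_self hh
  calc _ ≤ ∫ x in Omg h δ, K ^ 2 * (1 + rad x / (h + gam (rad x))) ^ 2 := by
        refine integral_mono_of_nonneg (ae_of_all _ fun x => sq_nonneg _)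
          ((SlipCusp.integrableOn_Omg_majorant hh.1).const_mul _) ?_
        filter_upwards [ae_restrict_mem (SlipCusp.isOpen_Omg h δ).measurableSet] with x hx
        rw [← mul_pow, ← sq_abs]
        exact pow_le_pow_left₀ (abs_nonneg _)
          (hprimitive h hh' i x (by linarith [hx.2.2, hδ.2]) ⟨hx.1.le, hx.2.1.le⟩) 2
    _ = K ^ 2 * ∫ x in Omg h δ, (1 + rad x / (h + gam (rad x))) ^ 2 := integral_const_mul _ _
    _ ≤ K ^ 2 := mul_le_of_le_one_right (sq_nonneg K) (SlipCusp.integral_Omg_majorant_le hδ hh')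
end
end
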